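/- Let ℓ ≥ 2, let k ≥ 0 be an integer, and let G be a finite simple graph none of whose connected components is a clique or an ℓ-clique. If there exists an edition set F for G with |F| = k such that G+F is an L-cluster graph, then Q(G) ≤ (2ℓ+2)k, P(G) ≤ 2ℓk, and S(G) ≤ 2k. -/

import Mathlib

open SimpleGraph

variable {V : Type*}

/-- The graph obtained from `G` by applying the edition set `F`
(symmetric difference of the edge set with `F`). -/
def editGraph (G : SimpleGraph V) (F : Finset (Sym2 V)) : SimpleGraph V :=
  SimpleGraph.fromEdgeSet (symmDiff G.edgeSet (F : Set (Sym2 V)))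

/-- An edition set is a finite set of unordered pairs of *distinct* vertices. -/
def IsEditionSet (F : Finset (Sym2 V)) : Prop := ∀ e ∈ F, ¬ e.IsDiag

/-- `S` induces in `G` an `ℓ`-clique: a connected complete (at most) `ℓ`-partite graph,
i.e. `S` splits into at most `ℓ` independent sets with all edges present between
different parts, and the induced subgraph is connected. -/
def IsEllCliqueOn (ℓ : ℕ) (G : SimpleGraph V) (S : Set V) : Prop :=
  (G.induce S).Connected ∧
  ∃ f : V → Fin ℓ, ∀ x ∈ S, ∀ y ∈ S, x ≠ y → (G.Adj x y ↔ f x ≠ f y)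

/-- A cluster graph: every connected component is a clique. -/
def IsCluster (G : SimpleGraph V) : Prop :=
  ∀ c : G.ConnectedComponent, G.IsClique c.supp

/-- A `K_ℓ`-cluster graph: every connected component is an `ℓ`-clique. -/
def IsKlCluster (ℓ : ℕ) (G : SimpleGraph V) : Prop :=
  ∀ c : G.ConnectedComponent, IsEllCliqueOn ℓ G c.supp

/-- An `L`-cluster graph: every connected component is a clique or an `ℓ`-clique. -/
def IsLCluster (ℓ : ℕ) (G : SimpleGraph V) : Prop :=
  ∀ c : G.ConnectedComponent, G.IsClique c.supp ∨ IsEllCliqueOn ℓ G c.supp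

/-- `G` contains an induced subgraph isomorphic to `H`. -/
def Contains {W : Type*} (H : SimpleGraph W) (G : SimpleGraph V) : Prop :=
  Nonempty (H ↪g G)

/-- The paw: a triangle with a pendant vertex (the complement of `P3 ∪ K1`). -/
def paw : SimpleGraph (Fin 4) :=
  SimpleGraph.fromEdgeSet {s(0,1), s(0,2), s(1,2), s(0,3)}

/-- The complete graph on `ℓ + 2` vertices minus one edge. -/
def completeMinusEdge (ℓ : ℕ) : SimpleGraph (Fin (ℓ + 2)) where
  Adj x y := x ≠ y ∧ s(x,y) ≠ s((0 : Fin (ℓ + 2)), 1)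
  symm := ⟨by
    rintro x y ⟨h1, h2⟩
    exact ⟨h1.symm, by rwa [Sym2.eq_swap]⟩⟩
  loopless := ⟨fun x h => h.1 rfl⟩

/-- The graph `G̃` on `V × {1,…,ℓ}`: `(u,p)` is adjacent to `(v,q)` iff `p ≠ q` and
(`u = v` or `uv ∈ E(G)`). -/
def tilde (ℓ : ℕ) (G : SimpleGraph V) : SimpleGraph (V × Fin ℓ) where
  Adj a b := a.2 ≠ b.2 ∧ (a.1 = b.1 ∨ G.Adj a.1 b.1)
  symm := ⟨fun _ _ h => ⟨h.1.symm, h.2.imp Eq.symm (fun h' => h'.symm)⟩⟩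
  loopless := ⟨fun _ h => h.1 rfl⟩

/-- `x` and `y` are twins in `G`: they are distinct and every other vertex is adjacent
to `x` iff it is adjacent to `y`. -/
def IsTwinPair (G : SimpleGraph V) (x y : V) : Prop :=
  x ≠ y ∧ ∀ z, z ≠ x → z ≠ y → (G.Adj z x ↔ G.Adj z y)

/-- The twin class of a vertex. -/
def twinClass (G : SimpleGraph V) (v : V) : Set V :=
  {w | w = v ∨ IsTwinPair G v w}

/-- The set of twin classes of `G`. -/
def twinClasses (G : SimpleGraph V) : Set (Set V) :=
  Set.range (twinClass G)

/-- The number of U-vertices of `G_Q` (singleton twin classes). -/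
noncomputable def Ucount (G : SimpleGraph V) : ℕ :=
  {C ∈ twinClasses G | C.Subsingleton}.ncard

/-- The number of P-vertices of `G_Q` (twin classes of size ≥ 2 of pairwise false twins). -/
noncomputable def Pcount (G : SimpleGraph V) : ℕ :=
  {C ∈ twinClasses G | 2 ≤ C.ncard ∧ ∀ x ∈ C, ∀ y ∈ C, x ≠ y → ¬ G.Adj x y}.ncard

/-- The number of S-vertices of `G_Q` (twin classes of size ≥ 2 of pairwise true twins). -/
noncomputable def Scount (G : SimpleGraph V) : ℕ :=
  {C ∈ twinClasses G | 2 ≤ C.ncard ∧ ∀ x ∈ C, ∀ y ∈ C, x ≠ y → G.Adj x y}.ncard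

/-- The total number of twin classes of `G` (vertices of the Q-quotient graph `G_Q`). -/
noncomputable def Qcount (G : SimpleGraph V) : ℕ :=
  (twinClasses G).ncard

/-- The edition set `F̃ = { {(u,p),(v,q)} : {u,v} ∈ F, p ≠ q }` on `V × {1,…,ℓ}`. -/
def liftEdition [Fintype V] [DecidableEq V] (ℓ : ℕ) (F : Finset (Sym2 V)) :
    Finset (Sym2 (V × Fin ℓ)) :=
  Finset.univ.filter (fun e => ∃ (u v : V) (p q : Fin ℓ),
    p ≠ q ∧ s(u,v) ∈ F ∧ e = s((u,p),(v,q)))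


/-!
Let `T` be the at most `2k` vertices touched by `F` and `H = G + F`. Outside `T` the two graphs
have the same adjacencies, so untouched vertices are twins in `G` iff they are twins in `H`; and
as no component of `G` is a clique or an `ℓ`-clique, every component of `H` contains a touched
vertex. Fix one in each component. A component of the `L`-cluster graph `H` consists of at most
`ℓ` parts of pairwise twins, so an untouched twin class of `G` is determined by the fixed vertex of
its component and its part. There are thus at most `ℓ|T|` untouched classes, and
`Q(G) ≤ |T| + ℓ|T|`.

The classes with at least two vertices, among them the P-vertices, fit into the same `ℓ|T|`
labels `(t, j)`. A touched class takes `(w, j)` for a touched vertex `w` that is not the fixed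
vertex of its component, or else `(r, j)` for a touched vertex `r` of it, which is then fixed, and
a part `j` of the component of `r` containing no untouched class. Such a part exists: a twin `u`
of `r` is adjacent to any untouched class outside the part of `r`, so it lies in the component and
is untouched, and an untouched class in the part of `u` would contain `u`.

Each touched class of true twins is charged to one of its touched vertices. The vertices of an
untouched class of true twins are adjacent to all of their component; if every touched vertex of
that component were the charged vertex of its own class of true twins, following true twins of
touched vertices inside the component would lead, through the complete multipartite structure of
the component, to an untouched vertex whose adjacencies differ in `G` and `H`.
-/

theorem Set.ncard_le_ncard_of_forall_subsingleton {α β : Type*} {s : Set α} {t : Set β}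
    (r : α → β → Prop) (hs : ∀ a ∈ s, ∃ b ∈ t, r a b)
    (ht : ∀ b ∈ t, {a ∈ s | r a b}.Subsingleton) (hsf : s.Finite := by toFinite_tac)
    (htf : t.Finite := by toFinite_tac) :
    s.ncard ≤ t.ncard := by
  rw [Set.ncard_eq_toFinset_card s hsf, Set.ncard_eq_toFinset_card t htf]
  exact Finset.card_le_card_of_forall_subsingleton r (by simpa using hs) (by simpa using ht)

section Twins

variable {G : SimpleGraph V} {x y z : V}

theorem IsTwinPair.ne (h : IsTwinPair G x y) : x ≠ y := h.1

theorem IsTwinPair.symm (h : IsTwinPair G x y) : IsTwinPair G y x :=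
  ⟨h.1.symm, fun w hwy hwx => (h.2 w hwx hwy).symm⟩

theorem IsTwinPair.trans (hxy : IsTwinPair G x y) (hyz : IsTwinPair G y z) (hxz : x ≠ z) :
    IsTwinPair G x z := by
  refine ⟨hxz, fun w hwx hwz => ?_⟩
  by_cases hwy : w = y
  · subst hwy
    rw [G.adj_comm w x, hyz.2 x hxy.ne hxz, G.adj_comm x z,
      hxy.2 z hxz.symm hyz.ne.symm, G.adj_comm z w]
  · exact (hxy.2 w hwx hwy).trans (hyz.2 w hwy hwz)

theorem mem_twinClass_self : x ∈ twinClass G x := Or.inl rfl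

theorem IsTwinPair.twinClass_subset (h : IsTwinPair G x y) : twinClass G x ⊆ twinClass G y := by
  rintro w (rfl | hxw)
  · exact Or.inr h.symm
  · by_cases hwy : w = y
    · exact Or.inl hwy
    · exact Or.inr (h.symm.trans hxw (Ne.symm hwy))

theorem IsTwinPair.twinClass_eq (h : IsTwinPair G x y) : twinClass G x = twinClass G y :=
  h.twinClass_subset.antisymm h.symm.twinClass_subset

theorem twinClass_eq_iff : twinClass G x = twinClass G y ↔ x = y ∨ IsTwinPair G x y := by
  refine ⟨fun h => ?_, ?_⟩
  · have hy : y ∈ twinClass G x := h ▸ mem_twinClass_self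
    exact hy.imp Eq.symm id
  · rintro (rfl | h)
    exacts [rfl, h.twinClass_eq]

theorem eq_twinClass_of_mem {C : Set V} (hC : C ∈ twinClasses G) (hx : x ∈ C) :
    C = twinClass G x := by
  obtain ⟨v, rfl⟩ := hC
  rcases hx with rfl | hvx
  exacts [rfl, hvx.twinClass_eq]

theorem IsTwinPair.of_reachable {H : SimpleGraph V} (hxy : H.Reachable x y) (hne : x ≠ y)
    (h : ∀ z, H.Reachable x z → z ≠ x → z ≠ y → (H.Adj z x ↔ H.Adj z y)) :
    IsTwinPair H x y := by
  refine ⟨hne, fun z hzx hzy => ?_⟩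
  by_cases hxz : H.Reachable x z
  · exact h z hxz hzx hzy
  · exact iff_of_false (fun hz => hxz hz.symm.reachable)
      (fun hz => hxz (hxy.trans hz.symm.reachable))

theorem twinClass_ne_of_isTwinPair {T : Set V} {t : V} (hzT : twinClass G z ⊆ Tᶜ) (ht : t ∈ T)
    (hty : IsTwinPair G t y) : twinClass G z ≠ twinClass G y :=
  fun h => hzT (h.trans hty.twinClass_eq.symm ▸ mem_twinClass_self) ht

end Twins

def AgreeOutside (G H : SimpleGraph V) (T : Set V) : Prop :=
  ∀ x ∉ T, ∀ y, G.Adj x y ↔ H.Adj x y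

namespace AgreeOutside

variable {G H : SimpleGraph V} {T : Set V} {x y : V}

theorem adj_iff_right (hU : AgreeOutside G H T) (hy : y ∉ T) : G.Adj x y ↔ H.Adj x y := by
  rw [G.adj_comm, H.adj_comm]
  exact hU y hy x

theorem isTwinPair_iff (hU : AgreeOutside G H T) (hx : x ∉ T) (hy : y ∉ T) :
    IsTwinPair G x y ↔ IsTwinPair H x y := by
  simp only [IsTwinPair, hU.adj_iff_right hx, hU.adj_iff_right hy]

theorem twinClass_eq (hU : AgreeOutside G H T) (hx : x ∉ T) (hy : y ∉ T)
    (h : x = y ∨ IsTwinPair H x y) : twinClass G x = twinClass G y :=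
  twinClass_eq_iff.mpr (h.imp_right (hU.isTwinPair_iff hx hy).mpr)

theorem reachable_iff (hU : AgreeOutside G H T) {v : V} (hv : ∀ x, H.Reachable v x → x ∉ T)
    (y : V) : G.Reachable v y ↔ H.Reachable v y := by
  have hv' : ∀ x, Relation.ReflTransGen H.Adj v x → x ∉ T :=
    fun x hx => hv x ((reachable_iff_reflTransGen _ _).mpr hx)
  simp only [reachable_iff_reflTransGen]
  constructor
  · intro h
    induction h with
    | refl => rfl
    | tail _ hab ih => exact ih.tail ((hU _ (hv' _ ih) _).mp hab)
  · intro h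
    induction h with
    | refl => rfl
    | tail hva hab ih => exact ih.tail ((hU _ (hv' _ hva) _).mpr hab)

end AgreeOutside

section Components

variable {G H : SimpleGraph V} {T S : Set V} {ℓ : ℕ} {x y z : V}

theorem AgreeOutside.isClique_iff (hU : AgreeOutside G H T) (hS : S ⊆ Tᶜ) :
    G.IsClique S ↔ H.IsClique S := by
  simp only [IsClique, Set.Pairwise]
  exact forall₂_congr fun a ha => forall₃_congr fun _ _ _ => hU a (hS ha) _

theorem AgreeOutside.isEllCliqueOn_iff (hU : AgreeOutside G H T) (hS : S ⊆ Tᶜ) :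
    IsEllCliqueOn ℓ G S ↔ IsEllCliqueOn ℓ H S := by
  have hind : G.induce S = H.induce S := by
    ext a b
    exact hU a (hS a.2) b
  simp only [IsEllCliqueOn, hind]
  refine and_congr_right fun _ => exists_congr fun f => ?_
  exact forall₂_congr fun a ha => forall₃_congr fun _ _ _ => by rw [hU a (hS ha)]

theorem AgreeOutside.exists_reachable_mem (hU : AgreeOutside G H T)
    (hG : ∀ c : G.ConnectedComponent, ¬ (G.IsClique c.supp ∨ IsEllCliqueOn ℓ G c.supp))
    (hL : IsLCluster ℓ H) (v : V) : ∃ t ∈ T, H.Reachable v t := by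
  by_contra! hv
  have hsupp : (G.connectedComponentMk v).supp = (H.connectedComponentMk v).supp := by
    ext y
    simp only [ConnectedComponent.mem_supp_iff, ConnectedComponent.eq,
      reachable_comm (u := y)]
    exact hU.reachable_iff (fun x hvx hx => hv x hx hvx) y
  have hST : (H.connectedComponentMk v).supp ⊆ Tᶜ := fun x hx hxT =>
    hv x hxT (ConnectedComponent.eq.mp hx).symm
  apply hG (G.connectedComponentMk v)
  rw [hsupp, hU.isClique_iff hST, hU.isEllCliqueOn_iff hST]
  exact hL _

def IsPartLabeling {β : Type*} (H : SimpleGraph V) (g : V → β) : Prop :=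
  ∀ x y, H.Reachable x y → x ≠ y → (g x = g y → IsTwinPair H x y) ∧ (g x ≠ g y → H.Adj x y)

theorem IsLCluster.exists_isPartLabeling (hℓ : 0 < ℓ) (hL : IsLCluster ℓ H) :
    ∃ g : V → Fin ℓ, IsPartLabeling H g := by
  have hcomp : ∀ c : H.ConnectedComponent, ∃ g : V → Fin ℓ, ∀ x ∈ c.supp, ∀ y ∈ c.supp,
      x ≠ y → (g x = g y → IsTwinPair H x y) ∧ (g x ≠ g y → H.Adj x y) := by
    intro c
    have hreach : ∀ x ∈ c.supp, ∀ y ∈ c.supp, H.Reachable x y := fun x hx y hy =>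
      ConnectedComponent.eq.mp (hx.trans hy.symm)
    rcases hL c with hc | ⟨-, f, hf⟩
    · refine ⟨fun _ => ⟨0, hℓ⟩, fun x hx y hy hxy => ⟨fun _ => ?_, fun h => absurd rfl h⟩⟩
      refine .of_reachable (hreach x hx y hy) hxy fun w hxw hwx hwy => ?_
      have hw : w ∈ c.supp := (ConnectedComponent.eq.mpr hxw).symm.trans hx
      exact iff_of_true (hc hw hx hwx) (hc hw hy hwy)
    · refine ⟨f, fun x hx y hy hxy => ⟨fun hfxy => ?_, (hf x hx y hy hxy).mpr⟩⟩
      refine .of_reachable (hreach x hx y hy) hxy fun w hxw hwx hwy => ?_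
      have hw : w ∈ c.supp := (ConnectedComponent.eq.mpr hxw).symm.trans hx
      rw [hf w hw x hx hwx, hf w hw y hy hwy, hfxy]
  choose g hg using hcomp
  refine ⟨fun x => g (H.connectedComponentMk x) x, fun x y hxy hne => ?_⟩
  have hmk : H.connectedComponentMk y = H.connectedComponentMk x :=
    ConnectedComponent.eq.mpr hxy.symm
  simp only [hmk]
  exact hg _ x rfl y hmk hne

theorem IsLCluster.not_adj_trans (hL : IsLCluster ℓ H) (hxy : H.Reachable x y)
    (hyz : H.Reachable y z) (hxz : x ≠ z) (hnxy : ¬ H.Adj x y) (hnyz : ¬ H.Adj y z) :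
    ¬ H.Adj x z := by
  rcases eq_or_ne x y with rfl | hne
  · exact hnyz
  set c := H.connectedComponentMk x
  have hx : x ∈ c.supp := rfl
  have hy : y ∈ c.supp := ConnectedComponent.eq.mpr hxy.symm
  have hz : z ∈ c.supp := ConnectedComponent.eq.mpr (hxy.trans hyz).symm
  rcases hL c with hc | ⟨-, f, hf⟩
  · exact absurd (hc hx hy hne) hnxy
  · rcases eq_or_ne y z with rfl | hyz'
    · exact hnxy
    rw [hf x hx z hz hxz, not_not]
    rw [hf x hx y hy hne, not_not] at hnxy
    rw [hf y hy z hz hyz', not_not] at hnyz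
    exact hnxy.trans hnyz

def IsUniversalInComponent (H : SimpleGraph V) (x : V) : Prop :=
  ∀ w, H.Reachable x w → w ≠ x → H.Adj w x

theorem IsUniversalInComponent.isTwinPair (hx : IsUniversalInComponent H x)
    (hy : IsUniversalInComponent H y) (hxy : H.Reachable x y) (hne : x ≠ y) :
    IsTwinPair H x y :=
  .of_reachable hxy hne fun w hxw hwx hwy =>
    iff_of_true (hx w hxw hwx) (hy w (hxy.symm.trans hxw) hwy)

theorem IsLCluster.isUniversalInComponent (hL : IsLCluster ℓ H) {x' : V} (hadj : H.Adj x x')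
    (htwin : IsTwinPair H x x') : IsUniversalInComponent H x := by
  intro w hxw hwx
  by_contra hnwx
  have hwx' : w ≠ x' := by rintro rfl; exact hnwx hadj.symm
  have hnwx' : ¬ H.Adj w x' := (htwin.2 w hwx hwx').not.mp hnwx
  exact hL.not_adj_trans hxw (hxw.symm.trans hadj.reachable) hadj.ne (fun h => hnwx h.symm) hnwx'
    hadj

end Components

section Counting

variable {G H : SimpleGraph V} {T : Set V} {ℓ : ℕ}

theorem ncard_twinClasses_le [Finite V] :
    (twinClasses G).ncard ≤ T.ncard + {C ∈ twinClasses G | C ⊆ Tᶜ}.ncard := by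
  have hsplit : twinClasses G ⊆
      {C ∈ twinClasses G | (C ∩ T).Nonempty} ∪ {C ∈ twinClasses G | C ⊆ Tᶜ} := by
    intro C hC
    by_cases hCT : (C ∩ T).Nonempty
    · exact Or.inl ⟨hC, hCT⟩
    · exact Or.inr ⟨hC, fun x hx hxT => hCT ⟨x, hx, hxT⟩⟩
  have htouched : {C ∈ twinClasses G | (C ∩ T).Nonempty}.ncard ≤ T.ncard := by
    refine Set.ncard_le_ncard_of_forall_subsingleton (fun C t => t ∈ C) (fun C ⟨_, hCT⟩ =>
      ⟨hCT.some, hCT.some_mem.2, hCT.some_mem.1⟩) ?_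
    rintro t - C₁ ⟨⟨hC₁, -⟩, ht₁⟩ C₂ ⟨⟨hC₂, -⟩, ht₂⟩
    rw [eq_twinClass_of_mem hC₁ ht₁, eq_twinClass_of_mem hC₂ ht₂]
  calc (twinClasses G).ncard
      ≤ {C ∈ twinClasses G | (C ∩ T).Nonempty}.ncard + {C ∈ twinClasses G | C ⊆ Tᶜ}.ncard :=
        (Set.ncard_le_ncard hsplit).trans (Set.ncard_union_le _ _)
    _ ≤ _ := Nat.add_le_add_right htouched _

def IsTouchedRep (H : SimpleGraph V) (T : Set V) (τ : V → V) : Prop :=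
  ∀ x, τ x ∈ T ∧ H.Reachable x (τ x) ∧ ∀ y, H.Reachable x y → τ y = τ x

theorem exists_isTouchedRep (htouch : ∀ x, ∃ t ∈ T, H.Reachable x t) :
    ∃ τ : V → V, IsTouchedRep H T τ := by
  have hcomp : ∀ c : H.ConnectedComponent, ∃ t ∈ T, H.connectedComponentMk t = c := by
    intro c
    induction c using ConnectedComponent.ind with
    | h x =>
      obtain ⟨t, ht, hxt⟩ := htouch x
      exact ⟨t, ht, ConnectedComponent.eq.mpr hxt.symm⟩
  choose tC htC hmk using hcomp
  refine ⟨fun x => tC (H.connectedComponentMk x), fun x => ⟨htC _, ?_, fun y hxy => ?_⟩⟩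
  · exact (ConnectedComponent.eq.mp (hmk _)).symm
  · simp only [ConnectedComponent.eq.mpr hxy.symm]

theorem AgreeOutside.exists_part_avoiding (hℓ : 2 ≤ ℓ) (hU : AgreeOutside G H T)
    {g : V → Fin ℓ} (hg : IsPartLabeling H g) {r u₀ : V} (hr : r ∈ T)
    (hru₀ : IsTwinPair G r u₀) (hfree : ∀ u, IsTwinPair G r u → H.Reachable r u → u ∉ T) :
    ∃ j, ∀ x, H.Reachable r x → twinClass G x ⊆ Tᶜ → g x ≠ j := by
  by_contra! hall
  have hne : ∀ x, twinClass G x ⊆ Tᶜ → twinClass G x ≠ twinClass G u₀ :=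
    fun x hx => twinClass_ne_of_isTwinPair hx hr hru₀
  have : Nontrivial (Fin ℓ) := Fin.nontrivial_iff_two_le.mpr hℓ
  obtain ⟨j, hj⟩ := exists_ne (g r)
  obtain ⟨z, hrz, hzT, rfl⟩ := hall j
  have hz : z ∉ T := hzT mem_twinClass_self
  have hzr : z ≠ r := fun h => hz (h ▸ hr)
  have hzu₀ : z ≠ u₀ := fun h => hne z hzT (h ▸ rfl)
  have hGzr : G.Adj z r := (hU z hz r).mpr ((hg r z hrz hzr.symm).2 hj.symm).symm
  have hHzu₀ : H.Adj z u₀ := (hU z hz u₀).mp ((hru₀.2 z hzr hzu₀).mp hGzr)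
  have hru₀' : H.Reachable r u₀ := hrz.trans hHzu₀.reachable
  have hu₀ : u₀ ∉ T := hfree u₀ hru₀ hru₀'
  obtain ⟨x, hrx, hxT, hgx⟩ := hall (g u₀)
  have hxu₀ : x ≠ u₀ := fun h => hne x hxT (h ▸ rfl)
  exact hne x hxT (hU.twinClass_eq (hxT mem_twinClass_self) hu₀
    (Or.inr ((hg x u₀ (hrx.symm.trans hru₀') hxu₀).1 hgx)))

/-- The labels `(t, j)` available to a twin class `C`, when `τ` picks a touched vertex in every
component and `g` numbers the parts of the components. -/
def IsClassLabel (G H : SimpleGraph V) (T : Set V) (τ : V → V) (g : V → Fin ℓ) (C : Set V)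
    (b : V × Fin ℓ) : Prop :=
  (C ⊆ Tᶜ ∧ ∃ x ∈ C, (τ x, g x) = b) ∨
    (b.1 ∈ C ∩ T ∧ (b.1 ≠ τ b.1 ∨ ∀ x, H.Reachable b.1 x → twinClass G x ⊆ Tᶜ → g x ≠ b.2))

theorem AgreeOutside.exists_isClassLabel (hℓ : 2 ≤ ℓ) (hU : AgreeOutside G H T)
    {g : V → Fin ℓ} (hg : IsPartLabeling H g) {τ : V → V} (hτ : IsTouchedRep H T τ)
    {C : Set V} (hC : C ∈ twinClasses G) (hC' : C ⊆ Tᶜ ∨ 2 ≤ C.ncard) :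
    ∃ b ∈ T ×ˢ (Set.univ : Set (Fin ℓ)), IsClassLabel G H T τ g C b := by
  obtain ⟨x, rfl⟩ := hC
  by_cases hxT : twinClass G x ⊆ Tᶜ
  · exact ⟨(τ x, g x), ⟨(hτ x).1, trivial⟩, Or.inl ⟨hxT, x, mem_twinClass_self, rfl⟩⟩
  by_cases hw : ∃ w ∈ twinClass G x ∩ T, w ≠ τ w
  · obtain ⟨w, hw, hwτ⟩ := hw
    exact ⟨(w, ⟨0, by omega⟩), ⟨hw.2, trivial⟩, Or.inr ⟨hw, Or.inl hwτ⟩⟩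
  push Not at hw
  obtain ⟨r, hrx, hrT⟩ := Set.not_subset.mp hxT
  rw [Set.mem_compl_iff, not_not] at hrT
  have hclass : twinClass G x = twinClass G r := eq_twinClass_of_mem ⟨x, rfl⟩ hrx
  obtain ⟨u₀, hu₀, hu₀r⟩ := Set.exists_ne_of_one_lt_ncard (hC'.resolve_left hxT) r
  rw [hclass] at hu₀
  obtain ⟨j, hj⟩ := hU.exists_part_avoiding hℓ hg hrT (hu₀.resolve_left hu₀r)
    fun u hru hreach huT => by
      have hτu := (hτ r).2.2 u hreach
      rw [← hw u ⟨hclass ▸ Or.inr hru, huT⟩, ← hw r ⟨hrx, hrT⟩] at hτu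
      exact hru.ne hτu.symm
  exact ⟨(r, j), ⟨hrT, trivial⟩, Or.inr ⟨⟨hrx, hrT⟩, Or.inr hj⟩⟩

theorem AgreeOutside.eq_of_isClassLabel (hU : AgreeOutside G H T) {g : V → Fin ℓ}
    (hg : IsPartLabeling H g) {τ : V → V} (hτ : IsTouchedRep H T τ) {C₁ C₂ : Set V}
    (hC₁ : C₁ ∈ twinClasses G) (hC₂ : C₂ ∈ twinClasses G) {b : V × Fin ℓ}
    (h₁ : IsClassLabel G H T τ g C₁ b) (h₂ : IsClassLabel G H T τ g C₂ b) : C₁ = C₂ := by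
  have mixed : ∀ C C', C ∈ twinClasses G → (C ⊆ Tᶜ ∧ ∃ x ∈ C, (τ x, g x) = b) →
      ¬ (b.1 ∈ C' ∩ T ∧
        (b.1 ≠ τ b.1 ∨ ∀ x, H.Reachable b.1 x → twinClass G x ⊆ Tᶜ → g x ≠ b.2)) := by
    rintro C C' hC ⟨hCT, x, hx, rfl⟩ ⟨-, hτx | hgx⟩
    · exact hτx ((hτ x).2.2 _ (hτ x).2.1).symm
    · exact hgx x (hτ x).2.1.symm (eq_twinClass_of_mem hC hx ▸ hCT) rfl
  rcases h₁ with ⟨hC₁T, x₁, hx₁, hb₁⟩ | h₁ <;> rcases h₂ with ⟨hC₂T, x₂, hx₂, hb₂⟩ | h₂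
  · obtain ⟨hτx, hgx⟩ := Prod.mk.inj (hb₁.trans hb₂.symm)
    have hreach : H.Reachable x₁ x₂ := (hτ x₁).2.1.trans (hτx ▸ (hτ x₂).2.1.symm)
    rw [eq_twinClass_of_mem hC₁ hx₁, eq_twinClass_of_mem hC₂ hx₂]
    exact hU.twinClass_eq (hC₁T hx₁) (hC₂T hx₂)
      ((eq_or_ne x₁ x₂).imp_right fun hne => (hg x₁ x₂ hreach hne).1 hgx)
  · exact absurd h₂ (mixed C₁ C₂ hC₁ ⟨hC₁T, x₁, hx₁, hb₁⟩)
  · exact absurd h₁ (mixed C₂ C₁ hC₂ ⟨hC₂T, x₂, hx₂, hb₂⟩)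
  · rw [eq_twinClass_of_mem hC₁ h₁.1.1, eq_twinClass_of_mem hC₂ h₂.1.1]

theorem AgreeOutside.ncard_untouched_or_nontrivial_le [Finite V] (hℓ : 2 ≤ ℓ)
    (hU : AgreeOutside G H T) (hL : IsLCluster ℓ H) (htouch : ∀ x, ∃ t ∈ T, H.Reachable x t) :
    {C ∈ twinClasses G | C ⊆ Tᶜ ∨ 2 ≤ C.ncard}.ncard ≤ T.ncard * ℓ := by
  obtain ⟨g, hg⟩ := hL.exists_isPartLabeling (by omega)
  obtain ⟨τ, hτ⟩ := exists_isTouchedRep htouch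
  calc _ ≤ (T ×ˢ (Set.univ : Set (Fin ℓ))).ncard :=
        Set.ncard_le_ncard_of_forall_subsingleton (IsClassLabel G H T τ g)
          (fun C hC => hU.exists_isClassLabel hℓ hg hτ hC.1 hC.2)
          fun _ _ C₁ h₁ C₂ h₂ => hU.eq_of_isClassLabel hg hτ h₁.1.1 h₂.1.1 h₁.2 h₂.2
    _ = T.ncard * ℓ := by simp

end Counting

section TrueTwins

variable {G H : SimpleGraph V} {T : Set V} {ℓ : ℕ}

def sClasses (G : SimpleGraph V) : Set (Set V) :=
  {C ∈ twinClasses G | 2 ≤ C.ncard ∧ ∀ x ∈ C, ∀ y ∈ C, x ≠ y → G.Adj x y}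

theorem AgreeOutside.isUniversalInComponent (hU : AgreeOutside G H T) (hL : IsLCluster ℓ H)
    {C : Set V} (hC : C ∈ sClasses G) (hCT : C ⊆ Tᶜ) {x : V} (hx : x ∈ C) :
    IsUniversalInComponent H x := by
  obtain ⟨hC, h2, hadj⟩ := hC
  obtain ⟨x', hx', hne⟩ := Set.exists_ne_of_one_lt_ncard h2 x
  have htwin : IsTwinPair G x x' := by
    rw [eq_twinClass_of_mem hC hx] at hx'
    exact hx'.resolve_left hne
  exact hL.isUniversalInComponent ((hU x (hCT hx) x').mp (hadj x hx x' hx' hne.symm))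
    ((hU.isTwinPair_iff (hCT hx) (hCT hx')).mp htwin)

theorem AgreeOutside.reachable_of_isTwinPair (hU : AgreeOutside G H T) {z t u : V}
    (hz : IsUniversalInComponent H z) (hzT : twinClass G z ⊆ Tᶜ) (ht : t ∈ T)
    (hzt : H.Reachable z t) (htu : IsTwinPair G t u) : H.Reachable z u := by
  have hz' : z ∉ T := hzT mem_twinClass_self
  have hzt' : z ≠ t := fun h => hz' (h ▸ ht)
  have hzu : z ≠ u := fun h => twinClass_ne_of_isTwinPair hzT ht htu (h ▸ rfl)
  have hGzt : G.Adj z t := (hU z hz' t).mpr (hz t hzt hzt'.symm).symm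
  exact ((hU z hz' u).mp ((htu.2 z hzt' hzu).mp hGzt)).reachable

theorem AgreeOutside.not_forall_touched_private_trueTwin (hU : AgreeOutside G H T)
    (hL : IsLCluster ℓ H) {z t₀ : V} (hz : IsUniversalInComponent H z)
    (hzT : twinClass G z ⊆ Tᶜ) (ht₀ : t₀ ∈ T) (hzt₀ : H.Reachable z t₀) :
    ¬ ∀ t ∈ T, H.Reachable z t →
      (∃ u, IsTwinPair G t u ∧ G.Adj t u) ∧ ∀ u, IsTwinPair G t u → H.Reachable z u → u ∉ T := by
  intro hsat
  have hz' : z ∉ T := hzT mem_twinClass_self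
  obtain ⟨⟨u, htu, hGtu⟩, hfree⟩ := hsat t₀ ht₀ hzt₀
  have hzu := hU.reachable_of_isTwinPair hz hzT ht₀ hzt₀ htu
  have hu := hfree u htu hzu
  by_cases hu_univ : IsUniversalInComponent H u
  · refine twinClass_ne_of_isTwinPair hzT ht₀ htu (hU.twinClass_eq hz' hu ?_)
    exact (eq_or_ne z u).imp_right (hz.isTwinPair hu_univ hzu)
  simp only [IsUniversalInComponent, not_forall] at hu_univ
  obtain ⟨w, huw, hwu, hnwu⟩ := hu_univ
  have hzw : H.Reachable z w := hzu.trans huw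
  have hHwt₀ : H.Adj w t₀ := by
    by_contra h
    exact hL.not_adj_trans (hzt₀.symm.trans hzw) huw.symm htu.ne (fun h' => h h'.symm) hnwu
      ((hU.adj_iff_right hu).mp hGtu)
  have hw : w ∈ T := by
    by_contra hw
    exact hnwu ((hU w hw u).mp ((htu.2 w hHwt₀.ne hwu).mp ((hU w hw t₀).mpr hHwt₀)))
  obtain ⟨⟨v, hwv, hGwv⟩, hfree'⟩ := hsat w hw hzw
  have hzv := hU.reachable_of_isTwinPair hz hzT hw hzw hwv
  have hv := hfree' v hwv hzv
  have hHwv : H.Adj w v := (hU.adj_iff_right hv).mp hGwv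
  have huv : u ≠ v := by rintro rfl; exact hnwu hHwv
  have hHuv : H.Adj u v := by
    by_contra h
    exact hL.not_adj_trans huw.symm (hzu.symm.trans hzv) hwv.ne hnwu h hHwv
  have hGuw : G.Adj u w := (hwv.2 u hwu.symm huv).mpr ((hU u hu v).mpr hHuv)
  exact hnwu ((hU u hu w).mp hGuw).symm

/-- The labels available to a class of true twins, when `ρ` picks a touched vertex in every
touched class. -/
def IsTrueTwinLabel (G H : SimpleGraph V) (T : Set V) (ρ : Set V → V) (C : Set V) (t : V) :
    Prop :=
  ((C ∩ T).Nonempty ∧ t = ρ C) ∨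
    (C ⊆ Tᶜ ∧ ∃ x ∈ C, H.Reachable x t ∧ ¬ (twinClass G t ∈ sClasses G ∧ ρ (twinClass G t) = t))

theorem AgreeOutside.exists_isTrueTwinLabel (hU : AgreeOutside G H T) (hL : IsLCluster ℓ H)
    (htouch : ∀ x, ∃ t ∈ T, H.Reachable x t) {ρ : Set V → V}
    (hρ : ∀ C, (C ∩ T).Nonempty → ρ C ∈ C ∩ T) {C : Set V} (hC : C ∈ sClasses G) :
    ∃ t ∈ T, IsTrueTwinLabel G H T ρ C t := by
  by_cases hCT : (C ∩ T).Nonempty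
  · exact ⟨ρ C, (hρ C hCT).2, Or.inl ⟨hCT, rfl⟩⟩
  replace hCT : C ⊆ Tᶜ := fun x hx hxT => hCT ⟨x, hx, hxT⟩
  obtain ⟨x, hx⟩ := Set.nonempty_of_ncard_ne_zero (by have := hC.2.1; omega : C.ncard ≠ 0)
  suffices ∃ t ∈ T, H.Reachable x t ∧ ¬ (twinClass G t ∈ sClasses G ∧ ρ (twinClass G t) = t) by
    obtain ⟨t, ht, hxt, hnot⟩ := this
    exact ⟨t, ht, Or.inr ⟨hCT, x, hx, hxt, hnot⟩⟩
  by_contra! hall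
  obtain ⟨t₀, ht₀, hxt₀⟩ := htouch x
  refine hU.not_forall_touched_private_trueTwin hL (hU.isUniversalInComponent hL hC hCT hx)
    (eq_twinClass_of_mem hC.1 hx ▸ hCT) ht₀ hxt₀ fun t ht hxt => ⟨?_, fun u htu hxu huT => ?_⟩
  · obtain ⟨⟨-, h2t, hadjt⟩, -⟩ := hall t ht hxt
    obtain ⟨u, hu, hut⟩ := Set.exists_ne_of_one_lt_ncard h2t t
    exact ⟨u, hu.resolve_left hut, hadjt t mem_twinClass_self u hu hut.symm⟩
  · have hρu := (hall u huT hxu).2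
    rw [← htu.twinClass_eq, (hall t ht hxt).2] at hρu
    exact htu.ne hρu

theorem AgreeOutside.eq_of_isTrueTwinLabel (hU : AgreeOutside G H T) (hL : IsLCluster ℓ H)
    {ρ : Set V → V} (hρ : ∀ C, (C ∩ T).Nonempty → ρ C ∈ C ∩ T) {C₁ C₂ : Set V}
    (hC₁ : C₁ ∈ sClasses G) (hC₂ : C₂ ∈ sClasses G) {t : V}
    (h₁ : IsTrueTwinLabel G H T ρ C₁ t) (h₂ : IsTrueTwinLabel G H T ρ C₂ t) : C₁ = C₂ := by
  have mixed : ∀ C C', C' ∈ sClasses G → (C' ∩ T).Nonempty → t = ρ C' →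
      ¬ (C ⊆ Tᶜ ∧ ∃ x ∈ C, H.Reachable x t ∧
        ¬ (twinClass G t ∈ sClasses G ∧ ρ (twinClass G t) = t)) := by
    rintro C C' hC' hC'T rfl ⟨-, -, -, -, hnot⟩
    rw [← eq_twinClass_of_mem hC'.1 (hρ C' hC'T).1] at hnot
    exact hnot ⟨hC', rfl⟩
  rcases h₁ with ⟨hC₁T, rfl⟩ | h₁ <;> rcases h₂ with ⟨hC₂T, ht⟩ | h₂
  · rw [eq_twinClass_of_mem hC₁.1 (hρ C₁ hC₁T).1, eq_twinClass_of_mem hC₂.1 (ht ▸ (hρ C₂ hC₂T).1)]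
  · exact absurd h₂ (mixed C₂ C₁ hC₁ hC₁T rfl)
  · exact absurd h₁ (mixed C₁ C₂ hC₂ hC₂T ht)
  · obtain ⟨hC₁T, x₁, hx₁, hxt₁, -⟩ := h₁
    obtain ⟨hC₂T, x₂, hx₂, hxt₂, -⟩ := h₂
    rw [eq_twinClass_of_mem hC₁.1 hx₁, eq_twinClass_of_mem hC₂.1 hx₂]
    refine hU.twinClass_eq (hC₁T hx₁) (hC₂T hx₂) ((eq_or_ne x₁ x₂).imp_right ?_)
    exact (hU.isUniversalInComponent hL hC₁ hC₁T hx₁).isTwinPair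
      (hU.isUniversalInComponent hL hC₂ hC₂T hx₂) (hxt₁.trans hxt₂.symm)

theorem AgreeOutside.ncard_sClasses_le [Finite V] (hU : AgreeOutside G H T)
    (hL : IsLCluster ℓ H) (htouch : ∀ x, ∃ t ∈ T, H.Reachable x t) :
    (sClasses G).ncard ≤ T.ncard := by
  rcases isEmpty_or_nonempty V with hV | hV
  · simp [sClasses, twinClasses, Set.range_eq_empty]
  let ρ : Set V → V := fun C => Classical.epsilon (· ∈ C ∩ T)
  have hρ : ∀ C, (C ∩ T).Nonempty → ρ C ∈ C ∩ T := fun C h => Classical.epsilon_spec h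
  exact Set.ncard_le_ncard_of_forall_subsingleton (IsTrueTwinLabel G H T ρ)
    (fun C hC => hU.exists_isTrueTwinLabel hL htouch hρ hC)
    fun _ _ C₁ h₁ C₂ h₂ => hU.eq_of_isTrueTwinLabel hL hρ h₁.1 h₂.1 h₁.2 h₂.2

end TrueTwins

theorem agreeOutside_editGraph [DecidableEq V] (G : SimpleGraph V) (F : Finset (Sym2 V)) :
    AgreeOutside G (editGraph G F) (F.biUnion Sym2.toFinset : Finset V) := by
  intro x hx y
  have hxy : s(x, y) ∉ F := fun h =>
    hx (Finset.mem_biUnion.mpr ⟨_, h, Sym2.mem_toFinset.mpr (Sym2.mem_mk_left x y)⟩)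
  simp only [editGraph, fromEdgeSet_adj, Set.mem_symmDiff, mem_edgeSet,
    Finset.mem_coe, hxy, not_false_eq_true, and_true, false_and, or_false]
  exact ⟨fun h => ⟨h, h.ne⟩, And.left⟩

theorem card_biUnion_toFinset_le [DecidableEq V] (F : Finset (Sym2 V)) :
    (F.biUnion Sym2.toFinset).card ≤ 2 * F.card := by
  refine Finset.card_biUnion_le.trans ?_
  rw [mul_comm, ← smul_eq_mul]
  refine Finset.sum_le_card_nsmul _ _ _ fun e _ => ?_
  rw [Sym2.card_toFinset]
  split_ifs <;> omega

/-- Theorem 6: if `G` has no clique or `ℓ`-clique component and `k` edge editions turn it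
into an `L`-cluster graph, then `Q(G) ≤ (2ℓ+2)k`, `P(G) ≤ 2ℓk` and `S(G) ≤ 2k`. -/
theorem k_editions_kernel_bounds [Fintype V] (ℓ k : ℕ) (hℓ : 2 ≤ ℓ) (G : SimpleGraph V)
    (hG : ∀ c : G.ConnectedComponent,
      ¬ (G.IsClique c.supp ∨ IsEllCliqueOn ℓ G c.supp))
    (hex : ∃ F : Finset (Sym2 V), IsEditionSet F ∧ F.card = k ∧
      IsLCluster ℓ (editGraph G F)) :
    Qcount G ≤ (2 * ℓ + 2) * k ∧ Pcount G ≤ 2 * ℓ * k ∧ Scount G ≤ 2 * k := by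
  classical
  obtain ⟨F, -, rfl, hL⟩ := hex
  have hU := agreeOutside_editGraph G F
  set T : Set V := ↑(F.biUnion Sym2.toFinset) with hT_def
  have hT : T.ncard ≤ 2 * F.card := by
    rw [hT_def, Set.ncard_coe_finset]
    exact card_biUnion_toFinset_le F
  have htouch := hU.exists_reachable_mem hG hL
  have hA := hU.ncard_untouched_or_nontrivial_le hℓ hL htouch
  refine ⟨?_, ?_, (hU.ncard_sClasses_le hL htouch).trans hT⟩
  · calc Qcount G ≤ T.ncard + {C ∈ twinClasses G | C ⊆ Tᶜ}.ncard := ncard_twinClasses_le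
      _ ≤ T.ncard + {C ∈ twinClasses G | C ⊆ Tᶜ ∨ 2 ≤ C.ncard}.ncard := by
          apply Nat.add_le_add_left
          exact Set.ncard_le_ncard fun C hC => ⟨hC.1, Or.inl hC.2⟩
      _ ≤ 2 * F.card + 2 * F.card * ℓ := by gcongr; exact hA.trans (by gcongr)
      _ = (2 * ℓ + 2) * F.card := by ring
  · calc Pcount G ≤ {C ∈ twinClasses G | C ⊆ Tᶜ ∨ 2 ≤ C.ncard}.ncard :=
          Set.ncard_le_ncard fun C hC => ⟨hC.1, Or.inr hC.2.1⟩
      _ ≤ 2 * F.card * ℓ := hA.trans (by gcongr)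
      _ = 2 * ℓ * F.card := by ring
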